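/- arXiv:0906.1178 — 2 statements merged into one kernel-verified Lean document; each statement's English description precedes it below -/
import Mathlib

section
/- Fix a real number a ≠ 0 and let G be the subgroup of isometries of ℝ³ generated by the four maps R₀(x,y,z) = (−z + a, −y − a, −x + a), R₁(x,y,z) = (y, x, z), R̂₂(x,y,z) = (−y, −x, z), R̃₂(x,y,z) = (x, −z, −y). Then the orbit of the origin under G (the vertex set of the regular complex K₇(1,2), whose edge graph is the diamond net) equals 2aΛ_{(1,1,0)} ∪ ((a, −a, a) + 2aΛ_{(1,1,0)}); explicitly, it consists of all points (2am₁, 2am₂, 2am₃) and all points (a + 2am₁, −a + 2am₂, a + 2am₃) with m₁, m₂, m₃ ∈ ℤ and m₁ + m₂ + m₃ even. -/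
/-!
Each generator is an involution mapping the claimed vertex set `D` into itself, hence onto
itself, so the whole group stabilises `D ∋ 0` and the orbit lies in `D`.

Conversely, `R₀R₁R̃₂R₁` is the glide `(x, y, z) ↦ (x + a, -y - a, z + a)`, whose square is
the translation by `2a(1, 0, 1)`. Conjugating it by the linear generators `R₁` and `R̂₂` gives
the translations by `2a(0, 1, 1)` and `2a(0, -1, 1)`, and these three vectors span
`2aΛ_{(1,1,0)}`. Hence the orbit contains `2aΛ_{(1,1,0)}` and
`R₀ 0 + 2aΛ_{(1,1,0)} = (a, -a, a) + 2aΛ_{(1,1,0)}`.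
-/

noncomputable section

abbrev E3 : Type := EuclideanSpace ℝ (Fin 3)

def pt (x y z : ℝ) : E3 := WithLp.toLp 2 ![x, y, z]

open Function Set

theorem Function.Involutive.apply_mem_iff {α : Type*} {f : α → α} {S : Set α}
    (hf : Involutive f) (hS : MapsTo f S S) (x : α) : f x ∈ S ↔ x ∈ S :=
  ⟨fun hx => hf x ▸ hS hx, fun hx => hS hx⟩

namespace IsometryEquiv

variable {X : Type*} [PseudoEMetricSpace X]

theorem apply_mem_iff_of_mem_closure {s : Set (X ≃ᵢ X)} {S : Set X}
    (hs : ∀ g ∈ s, ∀ x, g x ∈ S ↔ x ∈ S) {g : X ≃ᵢ X}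
    (hg : g ∈ Subgroup.closure s) (x : X) : g x ∈ S ↔ x ∈ S := by
  induction hg using Subgroup.closure_induction generalizing x with
  | mem g hg => exact hs g hg x
  | one => rfl
  | mul g h _ _ hg hh => exact (hg (h x)).trans (hh x)
  | inv g _ hg => simpa using (hg (g⁻¹ x)).symm

def translations [AddCommGroup X] (H : Subgroup (X ≃ᵢ X)) : AddSubgroup X where
  carrier := {v | ∃ τ ∈ H, ∀ x, τ x = x + v}
  zero_mem' := ⟨1, H.one_mem, fun x => (add_zero x).symm⟩
  add_mem' := by
    rintro u v ⟨τ, hτ, hu⟩ ⟨σ, hσ, hv⟩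
    refine ⟨τ * σ, H.mul_mem hτ hσ, fun x => ?_⟩
    rw [mul_apply, hu, hv, add_right_comm, add_assoc]
  neg_mem' := by
    rintro v ⟨τ, hτ, hv⟩
    refine ⟨τ⁻¹, H.inv_mem hτ, fun x => ?_⟩
    rw [eq_add_neg_iff_add_eq, ← hv, apply_inv_self]

theorem add_mem_orbit [AddCommGroup X] {H : Subgroup (X ≃ᵢ X)} {x₀ y v : X}
    (hy : ∃ g ∈ H, g x₀ = y) (hv : v ∈ translations H) : ∃ g ∈ H, g x₀ = y + v := by
  obtain ⟨g, hg, rfl⟩ := hy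
  obtain ⟨τ, hτ, hτv⟩ := hv
  exact ⟨τ * g, H.mul_mem hτ hg, hτv _⟩

theorem apply_mem_translations [AddCommGroup X] {H : Subgroup (X ≃ᵢ X)} {L : X ≃ᵢ X}
    (hL : L ∈ H) (hadd : ∀ x y, L (x + y) = L x + L y) {v : X} (hv : v ∈ translations H) :
    L v ∈ translations H := by
  obtain ⟨τ, hτ, hτv⟩ := hv
  refine ⟨L * τ * L⁻¹, H.mul_mem (H.mul_mem hL hτ) (H.inv_mem hL), fun x => ?_⟩
  rw [mul_apply, mul_apply, hτv, hadd, apply_inv_self]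

end IsometryEquiv

@[simp] theorem pt_apply_zero (x y z : ℝ) : pt x y z 0 = x := rfl
@[simp] theorem pt_apply_one (x y z : ℝ) : pt x y z 1 = y := rfl
@[simp] theorem pt_apply_two (x y z : ℝ) : pt x y z 2 = z := rfl

theorem E3.ext {u v : E3} (h0 : u 0 = v 0) (h1 : u 1 = v 1) (h2 : u 2 = v 2) : u = v := by
  ext i; fin_cases i <;> assumption

def diamondVertices (a : ℝ) : Set E3 :=
  {y : E3 | (∃ m1 m2 m3 : ℤ, Even (m1 + m2 + m3) ∧
      y 0 = 2 * a * m1 ∧ y 1 = 2 * a * m2 ∧ y 2 = 2 * a * m3) ∨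
    (∃ m1 m2 m3 : ℤ, Even (m1 + m2 + m3) ∧
      y 0 = a + 2 * a * m1 ∧ y 1 = -a + 2 * a * m2 ∧ y 2 = a + 2 * a * m3)}

section Generators

variable {a : ℝ} {R : E3 ≃ᵢ E3}

theorem apply_mem_diamondVertices_iff_of_R0
    (hR : ∀ x, R x = pt (-(x 2) + a) (-(x 1) - a) (-(x 0) + a)) (x : E3) :
    R x ∈ diamondVertices a ↔ x ∈ diamondVertices a := by
  refine Involutive.apply_mem_iff (fun x => E3.ext ?_ ?_ ?_) (fun x hx => ?_) x
  iterate 3 simp [hR]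
  rw [hR]
  simp only [diamondVertices, mem_ofPred_eq, Int.even_iff] at hx ⊢
  rcases hx with ⟨m1, m2, m3, hm, h0, h1, h2⟩ | ⟨m1, m2, m3, hm, h0, h1, h2⟩
  · refine .inr ⟨-m3, -m2, -m1, by omega, ?_, ?_, ?_⟩ <;> simp [*] <;> ring
  · refine .inl ⟨-m3, -m2, -m1, by omega, ?_, ?_, ?_⟩ <;> simp [*]

theorem apply_mem_diamondVertices_iff_of_R1
    (hR : ∀ x, R x = pt (x 1) (x 0) (x 2)) (x : E3) :
    R x ∈ diamondVertices a ↔ x ∈ diamondVertices a := by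
  refine Involutive.apply_mem_iff (fun x => E3.ext ?_ ?_ ?_) (fun x hx => ?_) x
  iterate 3 simp [hR]
  rw [hR]
  simp only [diamondVertices, mem_ofPred_eq, Int.even_iff] at hx ⊢
  rcases hx with ⟨m1, m2, m3, hm, h0, h1, h2⟩ | ⟨m1, m2, m3, hm, h0, h1, h2⟩
  · refine .inl ⟨m2, m1, m3, by omega, ?_, ?_, ?_⟩ <;> simp [*]
  · refine .inr ⟨m2 - 1, m1 + 1, m3, by omega, ?_, ?_, ?_⟩ <;> simp [*] <;> ring

theorem apply_mem_diamondVertices_iff_of_R2'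
    (hR : ∀ x, R x = pt (-(x 1)) (-(x 0)) (x 2)) (x : E3) :
    R x ∈ diamondVertices a ↔ x ∈ diamondVertices a := by
  refine Involutive.apply_mem_iff (fun x => E3.ext ?_ ?_ ?_) (fun x hx => ?_) x
  iterate 3 simp [hR]
  rw [hR]
  simp only [diamondVertices, mem_ofPred_eq, Int.even_iff] at hx ⊢
  rcases hx with ⟨m1, m2, m3, hm, h0, h1, h2⟩ | ⟨m1, m2, m3, hm, h0, h1, h2⟩
  · refine .inl ⟨-m2, -m1, m3, by omega, ?_, ?_, ?_⟩ <;> simp [*]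
  · refine .inr ⟨-m2, -m1, m3, by omega, ?_, ?_, ?_⟩ <;> simp [*] <;> ring

theorem apply_mem_diamondVertices_iff_of_R2''
    (hR : ∀ x, R x = pt (x 0) (-(x 2)) (-(x 1))) (x : E3) :
    R x ∈ diamondVertices a ↔ x ∈ diamondVertices a := by
  refine Involutive.apply_mem_iff (fun x => E3.ext ?_ ?_ ?_) (fun x hx => ?_) x
  iterate 3 simp [hR]
  rw [hR]
  simp only [diamondVertices, mem_ofPred_eq, Int.even_iff] at hx ⊢
  rcases hx with ⟨m1, m2, m3, hm, h0, h1, h2⟩ | ⟨m1, m2, m3, hm, h0, h1, h2⟩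
  · refine .inl ⟨m1, -m3, -m2, by omega, ?_, ?_, ?_⟩ <;> simp [*]
  · refine .inr ⟨m1, -m3, -m2, by omega, ?_, ?_, ?_⟩ <;> simp [*] <;> ring

end Generators

theorem pt_mem_of_fcc_generators {K : AddSubgroup E3} {a : ℝ}
    (h₁ : pt (2 * a) 0 (2 * a) ∈ K) (h₂ : pt 0 (2 * a) (2 * a) ∈ K)
    (h₃ : pt 0 (-(2 * a)) (2 * a) ∈ K) {m1 m2 m3 : ℤ} (hm : Even (m1 + m2 + m3)) :
    pt (2 * a * m1) (2 * a * m2) (2 * a * m3) ∈ K := by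
  obtain ⟨c, hc⟩ := hm
  have hc' : (m1 : ℝ) + m2 + m3 = c + c := by exact_mod_cast hc
  have hcomb : pt (2 * a * m1) (2 * a * m2) (2 * a * m3) =
      m1 • pt (2 * a) 0 (2 * a) + (c - m1) • pt 0 (2 * a) (2 * a) +
        (c - m1 - m2) • pt 0 (-(2 * a)) (2 * a) := by
    refine E3.ext ?_ ?_ ?_ <;> simp
    · ring
    · ring
    · linear_combination (2 * a) * hc'
  rw [hcomb]
  exact K.add_mem (K.add_mem (K.zsmul_mem h₁ _) (K.zsmul_mem h₂ _)) (K.zsmul_mem h₃ _)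

open IsometryEquiv

section Translations

variable {a : ℝ} {H : Subgroup (E3 ≃ᵢ E3)} {R0 R1 R2' R2'' : E3 ≃ᵢ E3}

theorem pt_mem_translations_of_R0_R1_R2'' (h0 : R0 ∈ H) (h1 : R1 ∈ H) (h2'' : R2'' ∈ H)
    (hR0 : ∀ x, R0 x = pt (-(x 2) + a) (-(x 1) - a) (-(x 0) + a))
    (hR1 : ∀ x, R1 x = pt (x 1) (x 0) (x 2))
    (hR2'' : ∀ x, R2'' x = pt (x 0) (-(x 2)) (-(x 1))) :
    pt (2 * a) 0 (2 * a) ∈ translations H := by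
  refine ⟨(R0 * R1 * R2'' * R1) ^ 2, pow_mem (mul_mem (mul_mem (mul_mem h0 h1) h2'') h1) 2,
    fun x => ?_⟩
  apply E3.ext <;> simp [pow_two, mul_apply, hR0, hR1, hR2''] <;> ring

theorem fcc_mem_translations (h0 : R0 ∈ H) (h1 : R1 ∈ H) (h2' : R2' ∈ H) (h2'' : R2'' ∈ H)
    (hR0 : ∀ x, R0 x = pt (-(x 2) + a) (-(x 1) - a) (-(x 0) + a))
    (hR1 : ∀ x, R1 x = pt (x 1) (x 0) (x 2))
    (hR2' : ∀ x, R2' x = pt (-(x 1)) (-(x 0)) (x 2))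
    (hR2'' : ∀ x, R2'' x = pt (x 0) (-(x 2)) (-(x 1))) {m1 m2 m3 : ℤ}
    (hm : Even (m1 + m2 + m3)) : pt (2 * a * m1) (2 * a * m2) (2 * a * m3) ∈ translations H := by
  have hv := pt_mem_translations_of_R0_R1_R2'' h0 h1 h2'' hR0 hR1 hR2''
  have hv₁ := apply_mem_translations h1 (fun x y => by apply E3.ext <;> simp [hR1]) hv
  have hv₂ := apply_mem_translations h2' (fun x y => by apply E3.ext <;> simp [hR2'] <;> ring) hv
  simp only [hR1, hR2', pt_apply_zero, pt_apply_one, pt_apply_two, neg_zero] at hv₁ hv₂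
  exact pt_mem_of_fcc_generators hv hv₁ hv₂ hm

theorem mem_orbit_of_mem_diamondVertices (h0 : R0 ∈ H)
    (hR0 : ∀ x, R0 x = pt (-(x 2) + a) (-(x 1) - a) (-(x 0) + a))
    (hT : ∀ m1 m2 m3 : ℤ, Even (m1 + m2 + m3) →
      pt (2 * a * m1) (2 * a * m2) (2 * a * m3) ∈ translations H)
    {y : E3} (hy : y ∈ diamondVertices a) : ∃ g ∈ H, g 0 = y := by
  rcases hy with ⟨m1, m2, m3, hm, h₀, h₁, h₂⟩ | ⟨m1, m2, m3, hm, h₀, h₁, h₂⟩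
  · have hy : y = 0 + pt (2 * a * m1) (2 * a * m2) (2 * a * m3) := by
      apply E3.ext <;> simp [*]
    exact hy ▸ add_mem_orbit ⟨1, H.one_mem, rfl⟩ (hT m1 m2 m3 hm)
  · have hy : y = R0 0 + pt (2 * a * m1) (2 * a * m2) (2 * a * m3) := by
      apply E3.ext <;> simp [*]
    exact hy ▸ add_mem_orbit ⟨R0, h0, rfl⟩ (hT m1 m2 m3 hm)

end Translations

theorem zero_mem_diamondVertices (a : ℝ) : (0 : E3) ∈ diamondVertices a :=
  .inl ⟨0, 0, 0, Even.zero, by simp, by simp, by simp⟩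

theorem vertex_set_K7_12_general
    (a : ℝ)
    (R0 R1 R2' R2'' : E3 ≃ᵢ E3)
    (hR0 : ∀ x : E3, R0 x = pt (-(x 2) + a) (-(x 1) - a) (-(x 0) + a))
    (hR1 : ∀ x : E3, R1 x = pt (x 1) (x 0) (x 2))
    (hR2' : ∀ x : E3, R2' x = pt (-(x 1)) (-(x 0)) (x 2))
    (hR2'' : ∀ x : E3, R2'' x = pt (x 0) (-(x 2)) (-(x 1))) :
    {y : E3 | ∃ g ∈ Subgroup.closure {R0, R1, R2', R2''}, g 0 = y} =
      {y : E3 | (∃ m1 m2 m3 : ℤ, Even (m1 + m2 + m3) ∧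
          y 0 = 2 * a * m1 ∧ y 1 = 2 * a * m2 ∧ y 2 = 2 * a * m3) ∨
        (∃ m1 m2 m3 : ℤ, Even (m1 + m2 + m3) ∧
          y 0 = a + 2 * a * m1 ∧ y 1 = -a + 2 * a * m2 ∧ y 2 = a + 2 * a * m3)} := by
  set H := Subgroup.closure {R0, R1, R2', R2''}
  have h0 : R0 ∈ H := Subgroup.subset_closure (by simp)
  have h1 : R1 ∈ H := Subgroup.subset_closure (by simp)
  have h2' : R2' ∈ H := Subgroup.subset_closure (by simp)
  have h2'' : R2'' ∈ H := Subgroup.subset_closure (by simp)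
  have hgen : ∀ g ∈ ({R0, R1, R2', R2''} : Set (E3 ≃ᵢ E3)),
      ∀ x, g x ∈ diamondVertices a ↔ x ∈ diamondVertices a := by
    rintro g (rfl | rfl | rfl | rfl)
    exacts [apply_mem_diamondVertices_iff_of_R0 hR0, apply_mem_diamondVertices_iff_of_R1 hR1,
      apply_mem_diamondVertices_iff_of_R2' hR2', apply_mem_diamondVertices_iff_of_R2'' hR2'']
  ext y
  refine ⟨?_, mem_orbit_of_mem_diamondVertices h0 hR0
    (fun _ _ _ => fcc_mem_translations h0 h1 h2' h2'' hR0 hR1 hR2' hR2'')⟩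
  rintro ⟨g, hg, rfl⟩
  exact (apply_mem_iff_of_mem_closure hgen hg 0).2 (zero_mem_diamondVertices a)

theorem vertex_set_K7_12
    (a : ℝ) (ha : a ≠ 0)
    (R0 R1 R2' R2'' : E3 ≃ᵢ E3)
    (hR0 : ∀ x : E3, R0 x = pt (-(x 2) + a) (-(x 1) - a) (-(x 0) + a))
    (hR1 : ∀ x : E3, R1 x = pt (x 1) (x 0) (x 2))
    (hR2' : ∀ x : E3, R2' x = pt (-(x 1)) (-(x 0)) (x 2))
    (hR2'' : ∀ x : E3, R2'' x = pt (x 0) (-(x 2)) (-(x 1))) :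
    {y : E3 | ∃ g ∈ Subgroup.closure {R0, R1, R2', R2''}, g 0 = y} =
      {y : E3 | (∃ m1 m2 m3 : ℤ, Even (m1 + m2 + m3) ∧
          y 0 = 2 * a * m1 ∧ y 1 = 2 * a * m2 ∧ y 2 = 2 * a * m3) ∨
        (∃ m1 m2 m3 : ℤ, Even (m1 + m2 + m3) ∧
          y 0 = a + 2 * a * m1 ∧ y 1 = -a + 2 * a * m2 ∧ y 2 = a + 2 * a * m3)} :=
  vertex_set_K7_12_general a R0 R1 R2' R2'' hR0 hR1 hR2' hR2''
end
end

section
/- Fix a real number a ≠ 0 and consider the two isometries of ℝ³ given by R₀(x,y,z) = (−z + a, −y − a, −x + a) and R₁(x,y,z) = (y, x, z). Then the orbit of the origin under the subgroup generated by R₀ and R₁ is exactly the six-point set {(0,0,0), (a,−a,a), (0,−2a,2a), (−a,−a,3a), (−2a,0,2a), (−a,a,a)} (the vertex set of the skew hexagonal base face of the regular complex K₇(1,2)). -/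
/-!
A finite set mapped into itself by each generator of a group of bijections is mapped onto itself
by every element of the group, since an injective self-map of a finite set is a bijection. The
six points are permuted by `R₀` and `R₁`, so they contain the orbit of the origin; conversely they
form a path `0 → R₀ 0 → R₁ R₀ 0 → ⋯` that alternates the two generators, so the orbit contains them.
-/

noncomputable section

open Set

namespace IsometryEquiv

variable {α : Type*} [PseudoEMetricSpace α] {s : Set (α ≃ᵢ α)}

theorem bijOn_of_mem_closure {S : Set α} (hS : S.Finite) (hs : ∀ g ∈ s, MapsTo g S S)
    {g : α ≃ᵢ α} (hg : g ∈ Subgroup.closure s) : BijOn g S S := by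
  induction hg using Subgroup.closure_induction with
  | mem g hg => exact (hS.injOn_iff_bijOn_of_mapsTo (hs g hg)).mp g.injective.injOn
  | one => exact bijOn_id S
  | mul g h _ _ hg hh => exact hg.comp hh
  | inv g _ hg => exact hg.symm ⟨fun x _ => g.apply_inv_self x, fun x _ => g.inv_apply_self x⟩

theorem apply_mem_orbit_closure {x y : α} {h : α ≃ᵢ α} (hh : h ∈ s)
    (hy : ∃ g ∈ Subgroup.closure s, g x = y) : ∃ g ∈ Subgroup.closure s, g x = h y := by
  obtain ⟨g, hg, rfl⟩ := hy
  exact ⟨h * g, mul_mem (Subgroup.subset_closure hh) hg, rfl⟩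

end IsometryEquiv

theorem pt_zero : pt 0 0 0 = 0 := by
  ext i; fin_cases i <;> rfl

theorem pt_inj {x y z x' y' z' : ℝ} : pt x y z = pt x' y' z' ↔ x = x' ∧ y = y' ∧ z = z' := by
  refine ⟨fun h => ⟨congrArg (· 0) h, congrArg (· 1) h, congrArg (· 2) h⟩, ?_⟩
  rintro ⟨rfl, rfl, rfl⟩
  rfl

def skewHexagon (a : ℝ) : Set E3 :=
  {pt 0 0 0, pt a (-a) a, pt 0 (-2 * a) (2 * a), pt (-a) (-a) (3 * a), pt (-2 * a) 0 (2 * a),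
    pt (-a) a a}

theorem skewHexagon_finite (a : ℝ) : (skewHexagon a).Finite := by
  simp only [skewHexagon, finite_insert, finite_singleton]

section

variable {a : ℝ} {f g : E3 → E3}

theorem mapsTo_skewHexagon_of_reflection
    (hf : ∀ x y z, f (pt x y z) = pt (-z + a) (-y - a) (-x + a)) :
    MapsTo f (skewHexagon a) (skewHexagon a) := by
  rintro _ (rfl | rfl | rfl | rfl | rfl | rfl) <;>
    simp only [hf, skewHexagon, mem_insert_iff, mem_singleton_iff, pt_inj] <;> grind

theorem mapsTo_skewHexagon_of_swap (hg : ∀ x y z, g (pt x y z) = pt y x z) :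
    MapsTo g (skewHexagon a) (skewHexagon a) := by
  rintro _ (rfl | rfl | rfl | rfl | rfl | rfl) <;>
    simp only [hg, skewHexagon, mem_insert_iff, mem_singleton_iff, pt_inj] <;> grind

theorem skewHexagon_subset {O : Set E3} (h0 : 0 ∈ O)
    (hf : ∀ x y z, f (pt x y z) = pt (-z + a) (-y - a) (-x + a)) (hfO : MapsTo f O O)
    (hg : ∀ x y z, g (pt x y z) = pt y x z) (hgO : MapsTo g O O) :
    skewHexagon a ⊆ O := by
  have step : ∀ {p q : E3} (h : E3 → E3), MapsTo h O O → p ∈ O → h p = q → q ∈ O :=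
    fun h hO hp hq => hq ▸ hO hp
  have v0 : pt 0 0 0 ∈ O := pt_zero ▸ h0
  have v1 : pt a (-a) a ∈ O := step f hfO v0 (by rw [hf, pt_inj]; ring_nf; simp)
  have v5 : pt (-a) a a ∈ O := step g hgO v1 (hg _ _ _)
  have v2 : pt 0 (-2 * a) (2 * a) ∈ O := step f hfO v5 (by rw [hf, pt_inj]; ring_nf; simp)
  have v4 : pt (-2 * a) 0 (2 * a) ∈ O := step g hgO v2 (hg _ _ _)
  have v3 : pt (-a) (-a) (3 * a) ∈ O := step f hfO v4 (by rw [hf, pt_inj]; ring_nf; simp)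
  rintro _ (rfl | rfl | rfl | rfl | rfl | rfl) <;> assumption

end

theorem base_face_K7_12_general
    (a : ℝ)
    (R0 R1 : E3 ≃ᵢ E3)
    (hR0 : ∀ x : E3, R0 x = pt (-(x 2) + a) (-(x 1) - a) (-(x 0) + a))
    (hR1 : ∀ x : E3, R1 x = pt (x 1) (x 0) (x 2)) :
    {y : E3 | ∃ g ∈ Subgroup.closure {R0, R1}, g 0 = y} =
      ({pt 0 0 0, pt a (-a) a, pt 0 (-2 * a) (2 * a), pt (-a) (-a) (3 * a),
        pt (-2 * a) 0 (2 * a), pt (-a) a a} : Set E3) := by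
  have hR0pt : ∀ x y z, R0 (pt x y z) = pt (-z + a) (-y - a) (-x + a) := fun _ _ _ => hR0 _
  have hR1pt : ∀ x y z, R1 (pt x y z) = pt y x z := fun _ _ _ => hR1 _
  change _ = skewHexagon a
  refine Subset.antisymm ?_ (skewHexagon_subset ⟨1, one_mem _, rfl⟩ hR0pt ?_ hR1pt ?_)
  · rintro _ ⟨g, hg, rfl⟩
    have hgens : ∀ h ∈ ({R0, R1} : Set (E3 ≃ᵢ E3)), MapsTo h (skewHexagon a) (skewHexagon a) := by
      rintro _ (rfl | rfl)
      exacts [mapsTo_skewHexagon_of_reflection hR0pt, mapsTo_skewHexagon_of_swap hR1pt]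
    exact (IsometryEquiv.bijOn_of_mem_closure (skewHexagon_finite a) hgens hg).mapsTo
      (pt_zero ▸ mem_insert _ _)
  · exact fun _ => IsometryEquiv.apply_mem_orbit_closure (mem_insert _ _)
  · exact fun _ => IsometryEquiv.apply_mem_orbit_closure (mem_insert_of_mem _ rfl)

theorem base_face_K7_12
    (a : ℝ) (ha : a ≠ 0)
    (R0 R1 : E3 ≃ᵢ E3)
    (hR0 : ∀ x : E3, R0 x = pt (-(x 2) + a) (-(x 1) - a) (-(x 0) + a))
    (hR1 : ∀ x : E3, R1 x = pt (x 1) (x 0) (x 2)) :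
    {y : E3 | ∃ g ∈ Subgroup.closure {R0, R1}, g 0 = y} =
      ({pt 0 0 0, pt a (-a) a, pt 0 (-2 * a) (2 * a), pt (-a) (-a) (3 * a),
        pt (-2 * a) 0 (2 * a), pt (-a) a a} : Set E3) :=
  base_face_K7_12_general a R0 R1 hR0 hR1
end
end
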